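/- For every integer s ≥ 0, the s-th power of F₁ satisfies F₁^s = ρ^{s/2}·[[F₁₁(s), F₁₂(s)], [F₂₁(s), F₂₂(s)]], where F₁₁(s) = sin((s+1)θ)/sin θ + (τ−1)·sin(sθ)/(√ρ·sin θ), F₁₂(s) = −τ√ρ·sin(sθ)/sin θ, F₂₁(s) = τ·sin(sθ)/(√ρ·sin θ), and F₂₂(s) = −sin((s−1)θ)/sin θ − (τ−1)·sin(sθ)/(√ρ·sin θ). -/

import Mathlib

/-!
By Cayley–Hamilton, `F₁² = (tr F₁) F₁ - (det F₁) 1` with `tr F₁ = 2 √ρ cos θ` and `det F₁ = ρ`.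
Any `A` with `A² = 2 r cos θ A - r²` has powers
`r sin θ · Aⁿ = rⁿ (sin (nθ) A - r sin ((n - 1)θ))`, by induction using the three-term
recurrence `sin ((n + 1)θ) = 2 cos θ sin (nθ) - sin ((n - 1)θ)`, and reading off the entries
gives the closed form.
-/

theorem Real.sin_add_one_mul (x θ : ℝ) :
    Real.sin ((x + 1) * θ) = 2 * Real.cos θ * Real.sin (x * θ) - Real.sin ((x - 1) * θ) := by
  have := Real.two_mul_sin_mul_cos (x * θ) θ
  rw [add_one_mul, sub_one_mul]
  linarith

open Polynomial in
theorem Matrix.sq_eq_trace_smul_sub_det_smul {R : Type*} [CommRing R]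
    (M : Matrix (Fin 2) (Fin 2) R) : M ^ 2 = M.trace • M - M.det • 1 := by
  nontriviality R
  have hCH := M.aeval_self_charpoly
  simp only [M.charpoly_fin_two, map_add, map_sub, map_mul, map_pow, aeval_X, aeval_C,
    Algebra.algebraMap_eq_smul_one, smul_mul_assoc, one_mul] at hCH
  rw [← sub_eq_zero, ← hCH]
  abel

theorem mul_sin_smul_pow_of_sq_eq {R : Type*} [Ring R] [Algebra ℝ R] {A : R} {r θ : ℝ}
    (hA : A ^ 2 = (2 * r * Real.cos θ) • A - r ^ 2 • 1) (n : ℕ) :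
    (r * Real.sin θ) • A ^ n =
      r ^ n • (Real.sin (n * θ) • A - (r * Real.sin ((n - 1) * θ)) • 1) := by
  induction n with
  | zero => simp [Real.sin_neg]
  | succ n ih =>
    rw [pow_succ, ← smul_mul_assoc, ih, smul_mul_assoc]
    simp only [sub_mul, smul_mul_assoc, one_mul, ← sq, hA, Nat.cast_succ, Real.sin_add_one_mul,
      add_sub_cancel_right]
    module

theorem matrix_power_closed_form_general
    (τ : ℕ) (hτ : 0 < τ) (ρ : ℝ)
    (hρlo : ((τ : ℝ) - 1) / ((τ : ℝ) + 3) < ρ)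
    (F1 : Matrix (Fin 2) (Fin 2) ℝ)
    (hF1 : F1 = !![ρ * (τ + 1), -(ρ * τ); (τ : ℝ), 1 - τ])
    (θ : ℝ) (hθ : θ ∈ Set.Ioo 0 Real.pi)
    (hcos : Real.cos θ = (ρ * (τ + 1) + 1 - τ) / (2 * Real.sqrt ρ))
    (F11 F12 F21 F22 : ℕ → ℝ)
    (hF11 : F11 = fun (s : ℕ) => Real.sin (((s : ℝ) + 1) * θ) / Real.sin θ
      + ((τ : ℝ) - 1) * Real.sin ((s : ℝ) * θ) / (Real.sqrt ρ * Real.sin θ))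
    (hF12 : F12 = fun (s : ℕ) => -((τ : ℝ) * Real.sqrt ρ * Real.sin ((s : ℝ) * θ) / Real.sin θ))
    (hF21 : F21 = fun (s : ℕ) => (τ : ℝ) * Real.sin ((s : ℝ) * θ) / (Real.sqrt ρ * Real.sin θ))
    (hF22 : F22 = fun (s : ℕ) => -(Real.sin (((s : ℝ) - 1) * θ) / Real.sin θ)
      - ((τ : ℝ) - 1) * Real.sin ((s : ℝ) * θ) / (Real.sqrt ρ * Real.sin θ))
 :
    ∀ s : ℕ, F1 ^ s = Real.sqrt ρ ^ s • !![F11 s, F12 s; F21 s, F22 s] := by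
  have hρ : 0 < ρ := by
    have hτ' : (1 : ℝ) ≤ τ := by exact_mod_cast hτ
    exact (div_nonneg (by linarith) (by positivity)).trans_lt hρlo
  obtain ⟨r, hr, rfl⟩ : ∃ r, 0 < r ∧ r ^ 2 = ρ := ⟨_, Real.sqrt_pos.2 hρ, Real.sq_sqrt hρ.le⟩
  simp only [Real.sqrt_sq hr.le] at hcos hF11 hF12 hF21 hF22 ⊢
  have hsin : 0 < Real.sin θ := Real.sin_pos_of_pos_of_lt_pi hθ.1 hθ.2
  have hCH : F1 ^ 2 = (2 * r * Real.cos θ) • F1 - r ^ 2 • 1 := by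
    rw [F1.sq_eq_trace_smul_sub_det_smul, hF1, Matrix.trace_fin_two_of, Matrix.det_fin_two_of,
      hcos]
    congr 2 <;> field_simp <;> ring
  intro s
  rw [← smul_right_inj (mul_ne_zero hr.ne' hsin.ne'), mul_sin_smul_pow_of_sq_eq hCH s, smul_comm]
  congr 1
  subst hF1 hF11 hF12 hF21 hF22
  simp only [Real.sin_add_one_mul, hcos]
  ext i j
  fin_cases i <;> fin_cases j <;> simp <;> field_simp <;> ring

theorem matrix_power_closed_form
    (τ : ℕ) (hτ : 0 < τ) (ρ : ℝ)
    (hρlo : ((τ : ℝ) - 1) / ((τ : ℝ) + 3) < ρ) (hρhi : ρ < 1)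
    (F1 : Matrix (Fin 2) (Fin 2) ℝ)
    (hF1 : F1 = !![ρ * (τ + 1), -(ρ * τ); (τ : ℝ), 1 - τ])
    (θ : ℝ) (hθ : θ ∈ Set.Ioo 0 Real.pi)
    (hcos : Real.cos θ = (ρ * (τ + 1) + 1 - τ) / (2 * Real.sqrt ρ))
    (hsin : Real.sin θ = Real.sqrt (4 * ρ - (ρ * (τ + 1) + 1 - τ) ^ 2) / (2 * Real.sqrt ρ))
    (F11 F12 F21 F22 : ℕ → ℝ)
    (hF11 : F11 = fun (s : ℕ) => Real.sin (((s : ℝ) + 1) * θ) / Real.sin θ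
      + ((τ : ℝ) - 1) * Real.sin ((s : ℝ) * θ) / (Real.sqrt ρ * Real.sin θ))
    (hF12 : F12 = fun (s : ℕ) => -((τ : ℝ) * Real.sqrt ρ * Real.sin ((s : ℝ) * θ) / Real.sin θ))
    (hF21 : F21 = fun (s : ℕ) => (τ : ℝ) * Real.sin ((s : ℝ) * θ) / (Real.sqrt ρ * Real.sin θ))
    (hF22 : F22 = fun (s : ℕ) => -(Real.sin (((s : ℝ) - 1) * θ) / Real.sin θ)
      - ((τ : ℝ) - 1) * Real.sin ((s : ℝ) * θ) / (Real.sqrt ρ * Real.sin θ))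
 :
    ∀ s : ℕ, F1 ^ s = Real.sqrt ρ ^ s • !![F11 s, F12 s; F21 s, F22 s] :=
  matrix_power_closed_form_general τ hτ ρ hρlo F1 hF1 θ hθ hcos F11 F12 F21 F22 hF11 hF12 hF21 hF22
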